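/- Let H be a thick spider with partition (S, K, R) such that |K| ≥ 4 and R = ∅, let u ∈ S, and let uw be a tail added to H (w ∉ V(H)). Then the minimum number of fill edges (excluding the tail uw) in a P4-sparse completion of H+uw equals |K|. -/

import Mathlib

open SimpleGraph Set

variable {α : Type*}

/-- The graph `G + uw` obtained from `G` by adding the tail edge `uw`. -/
def addTail (G : SimpleGraph α) (u w : α) : SimpleGraph α :=
  G ⊔ SimpleGraph.fromEdgeSet {s(u, w)}

/-- The number of fill edges of a completion `G'` of the base graph `base`:
the edges of `G'` that are not edges of `base`. -/
noncomputable def fillCount (base G' : SimpleGraph α) : ℕ :=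
  (G'.edgeSet \ base.edgeSet).ncard

/-- `S` is an independent set of the graph `G`. -/
def IsIndepSetOn (G : SimpleGraph α) (S : Set α) : Prop :=
  ∀ x ∈ S, ∀ y ∈ S, ¬ G.Adj x y

/-- A graph is split if its vertex set can be partitioned into a clique and an
independent set. -/
def IsSplitGraph (G : SimpleGraph α) : Prop :=
  ∃ K S : Set α, K ∪ S = Set.univ ∧ Disjoint K S ∧ G.IsClique K ∧ IsIndepSetOn G S

/-- `a b c d` (in this order) induce a chordless path `P₄` in `G`. -/
def IsInducedP4 (G : SimpleGraph α) (a b c d : α) : Prop :=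
  a ≠ b ∧ a ≠ c ∧ a ≠ d ∧ b ≠ c ∧ b ≠ d ∧ c ≠ d ∧
  G.Adj a b ∧ G.Adj b c ∧ G.Adj c d ∧ ¬ G.Adj a c ∧ ¬ G.Adj a d ∧ ¬ G.Adj b d

/-- `a b c d` (in this order) induce a chordless cycle `C₄` in `G`. -/
def IsInducedC4 (G : SimpleGraph α) (a b c d : α) : Prop :=
  a ≠ b ∧ a ≠ c ∧ a ≠ d ∧ b ≠ c ∧ b ≠ d ∧ c ≠ d ∧
  G.Adj a b ∧ G.Adj b c ∧ G.Adj c d ∧ G.Adj d a ∧ ¬ G.Adj a c ∧ ¬ G.Adj b d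

/-- `a b c d` induce a `2K₂` (two independent edges `ab` and `cd`) in `G`. -/
def IsInduced2K2 (G : SimpleGraph α) (a b c d : α) : Prop :=
  a ≠ b ∧ a ≠ c ∧ a ≠ d ∧ b ≠ c ∧ b ≠ d ∧ c ≠ d ∧
  G.Adj a b ∧ G.Adj c d ∧ ¬ G.Adj a c ∧ ¬ G.Adj a d ∧ ¬ G.Adj b c ∧ ¬ G.Adj b d

/-- A graph is threshold iff it has no induced `C₄`, `P₄`, or `2K₂`. -/
def IsThresholdGraph (G : SimpleGraph α) : Prop :=
  (∀ a b c d, ¬ IsInducedC4 G a b c d) ∧ (∀ a b c d, ¬ IsInducedP4 G a b c d) ∧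
  (∀ a b c d, ¬ IsInduced2K2 G a b c d)

/-- A graph is quasi-threshold iff it has no induced `C₄` or `P₄`. -/
def IsQuasiThresholdGraph (G : SimpleGraph α) : Prop :=
  (∀ a b c d, ¬ IsInducedC4 G a b c d) ∧ (∀ a b c d, ¬ IsInducedP4 G a b c d)

/-- `t` is the vertex set of an induced `P₄` of `G`. -/
def IsP4SetOn (G : SimpleGraph α) (t : Set α) : Prop :=
  ∃ a b c d : α, t = {a, b, c, d} ∧ IsInducedP4 G a b c d

/-- A graph is `P₄`-sparse iff every set of five vertices induces at most one `P₄`. -/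
def IsP4Sparse (G : SimpleGraph α) : Prop :=
  ∀ s : Set α, s.ncard = 5 →
    ∀ t₁ ⊆ s, ∀ t₂ ⊆ s, IsP4SetOn G t₁ → IsP4SetOn G t₂ → t₁ = t₂

/-- The subgraph of `H` induced by the set `R` (as a graph on the same vertex type,
all vertices outside `R` being isolated). -/
def restrictSet (H : SimpleGraph α) (R : Set α) : SimpleGraph α where
  Adj x y := H.Adj x y ∧ x ∈ R ∧ y ∈ R
  symm := ⟨fun x y ⟨h, hx, hy⟩ => ⟨h.symm, hy, hx⟩⟩
  loopless := ⟨fun x h => H.loopless.irrefl x h.1⟩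

/-- `(S, K, R)` is a thin-spider partition of (the vertex set of) `H`. -/
def ThinSpider (H : SimpleGraph α) (S K R : Set α) : Prop :=
  IsIndepSetOn H S ∧ H.IsClique K ∧ S.ncard = K.ncard ∧ 2 ≤ K.ncard ∧
  Disjoint S K ∧ Disjoint S R ∧ Disjoint K R ∧
  (∀ r ∈ R, ∀ k ∈ K, H.Adj r k) ∧ (∀ r ∈ R, ∀ s ∈ S, ¬ H.Adj r s) ∧
  ∃ f : α → α, Set.BijOn f S K ∧ ∀ s ∈ S, ∀ k ∈ K, (H.Adj s k ↔ k = f s)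

/-- `(S, K, R)` is a thick-spider partition of (the vertex set of) `H`;
thick spiders are assumed to have `|K| ≥ 3`. -/
def ThickSpider (H : SimpleGraph α) (S K R : Set α) : Prop :=
  IsIndepSetOn H S ∧ H.IsClique K ∧ S.ncard = K.ncard ∧ 3 ≤ K.ncard ∧
  Disjoint S K ∧ Disjoint S R ∧ Disjoint K R ∧
  (∀ r ∈ R, ∀ k ∈ K, H.Adj r k) ∧ (∀ r ∈ R, ∀ s ∈ S, ¬ H.Adj r s) ∧
  ∃ f : α → α, Set.BijOn f S K ∧ ∀ s ∈ S, ∀ k ∈ K, (H.Adj s k ↔ k ≠ f s)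

/-- The set of possible numbers of fill edges of completions of `base` into the
graph class `C`. -/
def completionFills (C : SimpleGraph α → Prop) (base : SimpleGraph α) : Set ℕ :=
  {n | ∃ G' : SimpleGraph α, base ≤ G' ∧ C G' ∧ fillCount base G' = n}

/-!
Write `k = |K|` and `f : S → K` for the bijection with `N(s) ∩ K = K \ {f s}`.

Upper bound: joining `u` to the `k` vertices of `(S \ {u}) ∪ {f u}` makes `u` universal and
leaves `w` pendant at `u`, so every induced `P₄` lies in the thick spider on `(S \ {u}) ∪ K`.
Each of those has vertex set `{x, y, f x, f y}`, and two different such sets span at least six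
vertices.

Lower bound: call `v ∈ (S ∪ K) \ {u}` untouched if no fill edge joins `v` to `u` or `w`. Each
touched vertex owns a fill edge at `u` or `w`, so there are at least `2k - 1 - #untouched` fill
edges, plus those avoiding `u` and `w`.
An untouched `c ∈ K \ {f u}` and an untouched `y ∈ (S \ {u}) ∪ {f u}` adjacent to it span the
induced `P₄` `w u c y`, and `P₄`-sparseness keeps these paths apart: there are at most `k`
untouched vertices, and at most `k - 1` unless some fill edge avoids `u` and `w` (this is where
`k ≥ 4` is needed).
-/

namespace IsInducedP4

variable {G : SimpleGraph α} {a b c d v w : α}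

theorem of_adj (hab : G.Adj a b) (hbc : G.Adj b c) (hcd : G.Adj c d) (hac : ¬ G.Adj a c)
    (had : ¬ G.Adj a d) (hbd : ¬ G.Adj b d) : IsInducedP4 G a b c d := by
  refine ⟨hab.ne, ?_, ?_, hbc.ne, ?_, hcd.ne, hab, hbc, hcd, hac, had, hbd⟩
  · rintro rfl; exact had hcd
  · rintro rfl; exact hac hcd.symm
  · rintro rfl; exact had hab

theorem symm (h : IsInducedP4 G a b c d) : IsInducedP4 G d c b a := by
  obtain ⟨-, -, -, -, -, -, hab, hbc, hcd, hac, had, hbd⟩ := h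
  exact of_adj hcd.symm hbc.symm hab.symm (fun h => hbd h.symm) (fun h => had h.symm)
    (fun h => hac h.symm)

theorem left_mem_of_isIndepSetOn {S K : Set α} (hS : IsIndepSetOn G S) (hK : G.IsClique K)
    (h : IsInducedP4 G a b c d) (ha : a ∈ S ∪ K) (hc : c ∈ S ∪ K) (hd : d ∈ S ∪ K) : a ∈ S := by
  obtain ⟨-, hac, had, -, -, -, -, -, hcd, nac, nad, -⟩ := h
  by_contra haS
  have haK : a ∈ K := ha.resolve_left haS
  have hcS : c ∈ S := hc.resolve_right fun hcK => nac (hK haK hcK hac)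
  have hdS : d ∈ S := hd.resolve_right fun hdK => nad (hK haK hdK had)
  exact hS c hcS d hdS hcd

theorem mem_and_eq_of_isIndepSetOn {S K : Set α} {f : α → α} (hS : IsIndepSetOn G S)
    (hK : G.IsClique K) (hSK : ∀ x ∈ S, ∀ y ∈ K, y ≠ f x → G.Adj x y) (h : IsInducedP4 G a b c d)
    (ha : a ∈ S ∪ K) (hb : b ∈ S ∪ K) (hc : c ∈ S ∪ K) (hd : d ∈ S ∪ K) :
    a ∈ S ∧ d ∈ S ∧ c = f a ∧ b = f d := by
  have haS := h.left_mem_of_isIndepSetOn hS hK ha hc hd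
  have hdS := h.symm.left_mem_of_isIndepSetOn hS hK hd hb ha
  obtain ⟨-, -, -, -, -, -, hab, -, hcd, nac, -, nbd⟩ := h
  have hbK : b ∈ K := hb.resolve_left fun hbS => hS a haS b hbS hab
  have hcK : c ∈ K := hc.resolve_left fun hcS => hS c hcS d hdS hcd
  refine ⟨haS, hdS, ?_, ?_⟩
  · by_contra hne; exact nac (hSK a haS c hcK hne)
  · by_contra hne; exact nbd (hSK d hdS b hbK hne).symm

theorem ncard_eq_four (h : IsInducedP4 G a b c d) : ({a, b, c, d} : Set α).ncard = 4 := by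
  obtain ⟨hab, hac, had, hbc, hbd, hcd, -⟩ := h
  rw [ncard_insert_of_notMem (by simp [hab, hac, had]),
    ncard_insert_of_notMem (by simp [hbc, hbd]), ncard_pair hcd]

theorem ne_of_forall_adj (h : IsInducedP4 G a b c d) (hv : ∀ x, x ≠ v → G.Adj v x) :
    a ≠ v ∧ b ≠ v ∧ c ≠ v ∧ d ≠ v := by
  obtain ⟨-, hac, -, -, hbd, -, -, -, -, nac, -, nbd⟩ := h
  refine ⟨?_, ?_, ?_, ?_⟩ <;> rintro rfl
  · exact nac (hv c hac.symm)
  · exact nbd (hv d hbd.symm)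
  · exact nac (hv a hac).symm
  · exact nbd (hv b hbd).symm

theorem ne_of_forall_adj_eq (h : IsInducedP4 G a b c d) (hw : ∀ x, G.Adj v x → x = w)
    (hw' : a ≠ w ∧ b ≠ w ∧ c ≠ w ∧ d ≠ w) : a ≠ v ∧ b ≠ v ∧ c ≠ v ∧ d ≠ v := by
  obtain ⟨-, -, -, -, -, -, hab, hbc, hcd, -⟩ := h
  refine ⟨?_, ?_, ?_, ?_⟩ <;> rintro rfl
  · exact hw'.2.1 (hw _ hab)
  · exact hw'.2.2.1 (hw _ hbc)
  · exact hw'.2.1 (hw _ hbc.symm)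
  · exact hw'.2.2.1 (hw _ hcd.symm)

end IsInducedP4

namespace IsP4Sparse

variable {G : SimpleGraph α} {a b c d b' c' d' : α}

theorem false_of_isInducedP4 (hG : IsP4Sparse G) {a' e : α} (h : IsInducedP4 G a b c d)
    (h' : IsInducedP4 G a' b' c' d') (hsub : ({a', b', c', d'} : Set α) ⊆ insert e {a, b, c, d})
    (he : e ∉ ({a, b, c, d} : Set α)) (he' : e ∈ ({a', b', c', d'} : Set α)) : False := by
  have h5 : (insert e {a, b, c, d} : Set α).ncard = 5 := by
    rw [ncard_insert_of_notMem he, h.ncard_eq_four]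
  have := hG _ h5 _ (subset_insert _ _) _ hsub ⟨a, b, c, d, rfl, h⟩ ⟨a', b', c', d', rfl, h'⟩
  exact he (this ▸ he')

theorem eq_of_isInducedP4_last (hG : IsP4Sparse G) (h : IsInducedP4 G a b c d)
    (h' : IsInducedP4 G a b c d') : d = d' := by
  by_contra hne
  obtain ⟨-, -, had', -, hbd', hcd', -⟩ := id h'
  exact hG.false_of_isInducedP4 (e := d') h h' (by simp [insert_subset_iff])
    (by simp [had'.symm, hbd'.symm, hcd'.symm, Ne.symm hne]) (by simp)

theorem eq_of_isInducedP4_third (hG : IsP4Sparse G) (h : IsInducedP4 G a b c d)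
    (h' : IsInducedP4 G a b c' d) : c = c' := by
  by_contra hne
  obtain ⟨-, hac', -, hbc', -, hcd', -⟩ := id h'
  exact hG.false_of_isInducedP4 (e := c') h h' (by simp [insert_subset_iff])
    (by simp [hac'.symm, hbc'.symm, hcd', Ne.symm hne]) (by simp)

theorem eq_of_isInducedP4_second (hG : IsP4Sparse G) (h : IsInducedP4 G a b c d)
    (h' : IsInducedP4 G a b' c d) : b = b' := by
  by_contra hne
  obtain ⟨hab', -, -, hbc', hbd', -⟩ := id h'
  exact hG.false_of_isInducedP4 (e := b') h h' (by simp [insert_subset_iff])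
    (by simp [hab'.symm, hbc', hbd', Ne.symm hne]) (by simp)

end IsP4Sparse

theorem isP4Sparse_of_forall_isP4SetOn {G : SimpleGraph α} {S : Set α} {f : α → α}
    (hf : InjOn f S) (hS : Disjoint S (f '' S))
    (h : ∀ t, IsP4SetOn G t → ∃ P ⊆ S, P.ncard = 2 ∧ t = P ∪ f '' P) : IsP4Sparse G := by
  intro s hs t₁ h₁s t₂ h₂s h₁ h₂
  obtain ⟨P₁, hP₁S, hP₁, rfl⟩ := h t₁ h₁
  obtain ⟨P₂, hP₂S, hP₂, rfl⟩ := h t₂ h₂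
  have hsfin : s.Finite := finite_of_ncard_pos (by omega)
  have hQS : P₁ ∪ P₂ ⊆ S := union_subset hP₁S hP₂S
  have hQs : (P₁ ∪ P₂) ∪ f '' (P₁ ∪ P₂) ⊆ s := by
    rw [image_union]
    exact union_subset (union_subset (subset_union_left.trans h₁s) (subset_union_left.trans h₂s))
      (union_subset (subset_union_right.trans h₁s) (subset_union_right.trans h₂s))
  have hQfin : (P₁ ∪ P₂).Finite := hsfin.subset (subset_union_left.trans hQs)
  have hcard : ((P₁ ∪ P₂) ∪ f '' (P₁ ∪ P₂)).ncard = 2 * (P₁ ∪ P₂).ncard := by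
    rw [ncard_union_eq (hS.mono hQS (image_mono hQS)) hQfin (hQfin.image f),
      (hf.mono hQS).ncard_image]
    ring
  have hQ : (P₁ ∪ P₂).ncard ≤ 2 := by
    have := ncard_le_ncard hQs hsfin
    omega
  have e₁ : P₁ = P₁ ∪ P₂ := eq_of_subset_of_ncard_le subset_union_left (by omega) hQfin
  have e₂ : P₂ = P₁ ∪ P₂ := eq_of_subset_of_ncard_le subset_union_right (by omega) hQfin
  rw [← e₁] at e₂
  rw [e₂]

theorem ncard_le_two_of_subsingleton {s : Set α} (p : α → Prop) (h₁ : {x ∈ s | p x}.Subsingleton)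
    (h₂ : {x ∈ s | ¬ p x}.Subsingleton) : s.ncard ≤ 2 := by
  have hs : s = {x ∈ s | p x} ∪ {x ∈ s | ¬ p x} := by
    ext x; by_cases hx : p x <;> simp [hx]
  rw [hs]
  calc _ ≤ _ := ncard_union_le _ _
    _ ≤ 1 + 1 := by
      gcongr
      · have := h₁.finite.to_subtype; exact ncard_le_one_iff_subsingleton.mpr h₁
      · have := h₂.finite.to_subtype; exact ncard_le_one_iff_subsingleton.mpr h₂

theorem exists_mem_ne_ne_ne {s : Set α} (hs : 3 < s.ncard) (a b c : α) :
    ∃ z ∈ s, z ≠ a ∧ z ≠ b ∧ z ≠ c := by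
  have h₁ := ncard_insert_le a {b, c}
  have h₂ := ncard_insert_le b {c}
  rw [ncard_singleton] at h₂
  obtain ⟨z, hz, hzabc⟩ := exists_mem_notMem_of_ncard_lt_ncard (s := {a, b, c}) (t := s) (by omega)
  simp only [mem_insert_iff, mem_singleton_iff, not_or] at hzabc
  exact ⟨z, hz, hzabc⟩

theorem ncard_add_ncard_le_of_forall_mem [Finite α] {u w : α} {F : Set (Sym2 α)}
    {U V : Set α} (hu : u ∉ V) (hw : w ∉ V)
    (hVU : ∀ v ∈ V \ U, s(w, v) ∈ F ∨ s(u, v) ∈ F) :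
    V.ncard + {e ∈ F | u ∉ e ∧ w ∉ e}.ncard ≤ F.ncard + U.ncard := by
  classical
  let φ : α → Sym2 α := fun v => if s(w, v) ∈ F then s(w, v) else s(u, v)
  have hφ : ∀ v, φ v = s(w, v) ∨ φ v = s(u, v) := fun v => by
    by_cases h : s(w, v) ∈ F <;> simp [φ, h]
  have hφF : ∀ v ∈ V \ U, φ v ∈ F := fun v hv => by
    by_cases h : s(w, v) ∈ F
    · simp [φ, h]
    · simpa [φ, h] using hVU v hv
  have hinj : InjOn φ (V \ U) := by
    intro v₁ hv₁ v₂ hv₂ he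
    have hmem : v₁ ∈ φ v₂ := he ▸ (by rcases hφ v₁ with h | h <;> simp [h])
    rcases hφ v₂ with h | h <;> rw [h, Sym2.mem_iff] at hmem <;> rcases hmem with rfl | rfl
    exacts [absurd hv₁.1 hw, rfl, absurd hv₁.1 hu, rfl]
  have hdisj : Disjoint (φ '' (V \ U)) {e ∈ F | u ∉ e ∧ w ∉ e} := by
    rw [Set.disjoint_left]
    rintro _ ⟨v, -, rfl⟩ ⟨-, hu', hw'⟩
    rcases hφ v with h | h <;> rw [h] at hu' hw' <;> simp at hu' hw'
  have hsub : φ '' (V \ U) ∪ {e ∈ F | u ∉ e ∧ w ∉ e} ⊆ F :=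
    union_subset (image_subset_iff.mpr hφF) (sep_subset _ _)
  have := ncard_le_ncard hsub
  rw [ncard_union_eq hdisj, hinj.ncard_image] at this
  have := ncard_le_ncard_sdiff_add_ncard V U
  omega

def addStar (G : SimpleGraph α) (u : α) (T : Set α) : SimpleGraph α :=
  G ⊔ fromEdgeSet ((fun v => s(u, v)) '' T)

theorem addStar_adj {G : SimpleGraph α} {u : α} {T : Set α} {x y : α} :
    (addStar G u T).Adj x y ↔ G.Adj x y ∨ x ≠ y ∧ (x = u ∧ y ∈ T ∨ y = u ∧ x ∈ T) := by
  simp only [addStar, sup_adj, fromEdgeSet_adj, mem_image, Sym2.eq_iff]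
  constructor
  · rintro (h | ⟨⟨v, hv, ⟨rfl, rfl⟩ | ⟨rfl, rfl⟩⟩, hne⟩) <;> tauto
  · rintro (h | ⟨hne, ⟨rfl, hy⟩ | ⟨rfl, hx⟩⟩)
    exacts [Or.inl h, Or.inr ⟨⟨y, hy, Or.inl ⟨rfl, rfl⟩⟩, hne⟩,
      Or.inr ⟨⟨x, hx, Or.inr ⟨rfl, rfl⟩⟩, hne⟩]

theorem fillCount_addStar {G : SimpleGraph α} {u : α} {T : Set α} (hu : u ∉ T)
    (hT : ∀ v ∈ T, ¬ G.Adj u v) : fillCount G (addStar G u T) = T.ncard := by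
  have hdiag : Disjoint ((fun v => s(u, v)) '' T) Sym2.diagSet := by
    rw [Set.disjoint_left]
    rintro _ ⟨v, hv, rfl⟩ h
    exact hu ((Sym2.mk_isDiag_iff.mp h) ▸ hv)
  have hG : Disjoint ((fun v => s(u, v)) '' T) G.edgeSet := by
    rw [Set.disjoint_left]
    rintro _ ⟨v, hv, rfl⟩ h
    exact hT v hv h
  have hinj : InjOn (fun v => s(u, v)) T := fun _ _ _ _ h => Sym2.congr_right.mp h
  rw [fillCount, addStar, edgeSet_sup, edgeSet_fromEdgeSet, union_sdiff_left, hdiag.sdiff_eq_left,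
    hG.sdiff_eq_left, hinj.ncard_image]

def thickSpiderTail (S K : Set α) (f : α → α) (u w : α) : SimpleGraph α :=
  fromRel fun x y => x ∈ K ∧ y ∈ K ∨ x ∈ S ∧ y ∈ K ∧ y ≠ f x ∨ x = u ∧ y = w

theorem thickSpiderTail_adj_of_mem {S K : Set α} {f : α → α} {u w x y : α} (hx : x ∈ K)
    (hy : y ∈ K) (hxy : x ≠ y) : (thickSpiderTail S K f u w).Adj x y :=
  (fromRel_adj _ _ _).mpr ⟨hxy, Or.inl (Or.inl ⟨hx, hy⟩)⟩

structure IsThickSpiderTail (S K : Set α) (f : α → α) (u w : α) : Prop where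
  disjoint : Disjoint S K
  union_eq : S ∪ K = {w}ᶜ
  bijOn : BijOn f S K
  u_mem : u ∈ S

theorem ThickSpider.exists_addTail_eq_thickSpiderTail {H : SimpleGraph α} {S K : Set α} {u w : α}
    (hH : ThickSpider H S K ∅) (hcover : S ∪ K = {w}ᶜ) (hw : ∀ x, ¬ H.Adj w x) (hu : u ∈ S) :
    ∃ f, IsThickSpiderTail S K f u w ∧ addTail H u w = thickSpiderTail S K f u w := by
  obtain ⟨hS, hK, -, -, hSK, -, -, -, -, f, hf, hfadj⟩ := hH
  have hmem : ∀ x, x ≠ w → x ∈ S ∨ x ∈ K := fun x hx => by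
    have : x ∈ S ∪ K := by rw [hcover]; exact hx
    exact this
  have huw : u ≠ w := by
    have : u ∈ S ∪ K := Or.inl hu
    rw [hcover] at this
    exact this
  let P : α → α → Prop := fun x y => x ∈ K ∧ y ∈ K ∨ x ∈ S ∧ y ∈ K ∧ y ≠ f x
  have hadj : ∀ x y, H.Adj x y ↔ x ≠ y ∧ (P x y ∨ P y x) := by
    intro x y
    constructor
    · intro h
      refine ⟨h.ne, ?_⟩
      rcases hmem x (fun e => hw y (e ▸ h)) with hx | hx <;>
        rcases hmem y (fun e => hw x (e ▸ h.symm)) with hy | hy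
      · exact absurd h (hS x hx y hy)
      · exact Or.inl (Or.inr ⟨hx, hy, (hfadj x hx y hy).mp h⟩)
      · exact Or.inr (Or.inr ⟨hy, hx, (hfadj y hy x hx).mp h.symm⟩)
      · exact Or.inl (Or.inl ⟨hx, hy⟩)
    · rintro ⟨hne, (⟨hx, hy⟩ | ⟨hx, hy, h⟩) | (⟨hy, hx⟩ | ⟨hy, hx, h⟩)⟩
      · exact hK hx hy hne
      · exact (hfadj x hx y hy).mpr h
      · exact hK hx hy hne
      · exact ((hfadj y hy x hx).mpr h).symm
  refine ⟨f, ⟨hSK, hcover, hf, hu⟩, ?_⟩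
  ext x y
  simp only [addTail, thickSpiderTail, sup_adj, fromEdgeSet_adj, fromRel_adj, mem_singleton_iff,
    Sym2.eq_iff, hadj, P, or_assoc]
  tauto

namespace IsThickSpiderTail

variable {S K : Set α} {f : α → α} {u w x y : α}

theorem mem_or_mem (hT : IsThickSpiderTail S K f u w) (hx : x ≠ w) : x ∈ S ∨ x ∈ K := by
  have : x ∈ S ∪ K := by rw [hT.union_eq]; exact hx
  exact this

theorem ne_w (hT : IsThickSpiderTail S K f u w) (hx : x ∈ S ∪ K) : x ≠ w := by
  rw [hT.union_eq] at hx
  exact hx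

theorem notMem_K (hT : IsThickSpiderTail S K f u w) (hx : x ∈ S) : x ∉ K :=
  Set.disjoint_left.mp hT.disjoint hx

theorem f_mem (hT : IsThickSpiderTail S K f u w) (hx : x ∈ S) : f x ∈ K := hT.bijOn.mapsTo hx

theorem f_ne_f (hT : IsThickSpiderTail S K f u w) (hx : x ∈ S) (hy : y ∈ S) (hxy : x ≠ y) :
    f x ≠ f y := fun h => hxy (hT.bijOn.injOn hx hy h)

theorem ncard_S (hT : IsThickSpiderTail S K f u w) : S.ncard = K.ncard := by
  rw [← hT.bijOn.image_eq, hT.bijOn.injOn.ncard_image]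

theorem ncard_insert_f_sdiff [Finite α] (hT : IsThickSpiderTail S K f u w) :
    (insert (f u) (S \ {u})).ncard = K.ncard := by
  rw [ncard_insert_of_notMem (fun h => hT.notMem_K h.1 (hT.f_mem hT.u_mem)),
    ncard_sdiff_singleton_add_one hT.u_mem, hT.ncard_S]

theorem adj_of_ne_f (hT : IsThickSpiderTail S K f u w) (hx : x ∈ S) (hy : y ∈ K)
    (hxy : y ≠ f x) : (thickSpiderTail S K f u w).Adj x y :=
  (fromRel_adj _ _ _).mpr ⟨fun h => hT.notMem_K hx (h ▸ hy), Or.inl (Or.inr (Or.inl ⟨hx, hy, hxy⟩))⟩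

theorem adj_u_w (hT : IsThickSpiderTail S K f u w) : (thickSpiderTail S K f u w).Adj u w :=
  (fromRel_adj _ _ _).mpr ⟨hT.ne_w (Or.inl hT.u_mem), Or.inl (Or.inr (Or.inr ⟨rfl, rfl⟩))⟩

theorem not_adj_w (hT : IsThickSpiderTail S K f u w) (hx : x ≠ u) :
    ¬ (thickSpiderTail S K f u w).Adj w x := by
  have hwS : w ∉ S := fun h => hT.ne_w (Or.inl h) rfl
  have hwK : w ∉ K := fun h => hT.ne_w (Or.inr h) rfl
  simp [thickSpiderTail, fromRel_adj, hwS, hwK, hx, (hT.ne_w (Or.inl hT.u_mem)).symm]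

theorem not_adj_of_mem_S (hT : IsThickSpiderTail S K f u w) (hx : x ∈ S) (hy : y ∈ S) :
    ¬ (thickSpiderTail S K f u w).Adj x y := by
  simp [thickSpiderTail, fromRel_adj, hT.notMem_K hx, hT.notMem_K hy, hT.ne_w (Or.inl hx),
    hT.ne_w (Or.inl hy)]

theorem not_adj_f (hT : IsThickSpiderTail S K f u w) (hx : x ∈ S) :
    ¬ (thickSpiderTail S K f u w).Adj x (f x) := by
  have hfx := hT.f_mem hx
  simp [thickSpiderTail, fromRel_adj, hT.notMem_K hx, hT.ne_w (Or.inr hfx),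
    hT.ne_w (Or.inl hx)]

theorem adj_addStar_u (hT : IsThickSpiderTail S K f u w) (hxu : x ≠ u) :
    (addStar (thickSpiderTail S K f u w) u (insert (f u) (S \ {u}))).Adj u x := by
  by_cases hxw : x = w
  · exact addStar_adj.mpr (Or.inl (hxw ▸ hT.adj_u_w))
  by_cases hx : x = f u ∨ x ∈ S
  · refine addStar_adj.mpr (Or.inr ⟨hxu.symm, Or.inl ⟨rfl, ?_⟩⟩)
    rcases hx with rfl | hx
    exacts [mem_insert _ _, mem_insert_of_mem _ ⟨hx, hxu⟩]
  · rw [not_or] at hx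
    exact addStar_adj.mpr (Or.inl (hT.adj_of_ne_f hT.u_mem
      ((hT.mem_or_mem hxw).resolve_left hx.2) hx.1))

theorem eq_u_of_adj_addStar_w (hT : IsThickSpiderTail S K f u w)
    (h : (addStar (thickSpiderTail S K f u w) u (insert (f u) (S \ {u}))).Adj w x) : x = u := by
  by_contra hxu
  rcases addStar_adj.mp h with h | ⟨-, ⟨rfl, -⟩ | ⟨-, hw⟩⟩
  · exact hT.not_adj_w hxu h
  · exact hT.ne_w (Or.inl hT.u_mem) rfl
  · rcases hw with rfl | ⟨hw, -⟩
    exacts [hT.ne_w (Or.inr (hT.f_mem hT.u_mem)) rfl, hT.ne_w (Or.inl hw) rfl]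

theorem isP4Sparse_addStar (hT : IsThickSpiderTail S K f u w) :
    IsP4Sparse (addStar (thickSpiderTail S K f u w) u (insert (f u) (S \ {u}))) := by
  set G := addStar (thickSpiderTail S K f u w) u (insert (f u) (S \ {u}))
  have hGS : IsIndepSetOn G (S \ {u}) := by
    rintro x ⟨hx, hxu⟩ y ⟨hy, hyu⟩ h
    rcases addStar_adj.mp h with h | ⟨-, ⟨rfl, -⟩ | ⟨rfl, -⟩⟩
    exacts [hT.not_adj_of_mem_S hx hy h, hxu rfl, hyu rfl]
  have hGK : G.IsClique K := fun x hx y hy hxy =>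
    addStar_adj.mpr (Or.inl (thickSpiderTail_adj_of_mem hx hy hxy))
  have hGSK : ∀ x ∈ S \ {u}, ∀ y ∈ K, y ≠ f x → G.Adj x y := fun x hx y hy hxy =>
    addStar_adj.mpr (Or.inl (hT.adj_of_ne_f hx.1 hy hxy))
  refine isP4Sparse_of_forall_isP4SetOn (S := S \ {u}) (hT.bijOn.injOn.mono sdiff_subset)
    (Set.disjoint_right.mpr ?_) ?_
  · rintro _ ⟨x, hx, rfl⟩ hfx
    exact hT.notMem_K hfx.1 (hT.f_mem hx.1)
  rintro _ ⟨a, b, c, d, rfl, h⟩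
  have hu := h.ne_of_forall_adj fun _ => hT.adj_addStar_u
  have hw := h.ne_of_forall_adj_eq (fun _ => hT.eq_u_of_adj_addStar_w) hu
  have hmem : ∀ x, x ≠ u → x ≠ w → x ∈ S \ {u} ∪ K := fun x hxu hxw =>
    (hT.mem_or_mem hxw).imp (fun hx => ⟨hx, hxu⟩) id
  obtain ⟨ha, hd, rfl, rfl⟩ := h.mem_and_eq_of_isIndepSetOn hGS hGK hGSK (hmem a hu.1 hw.1)
    (hmem b hu.2.1 hw.2.1) (hmem c hu.2.2.1 hw.2.2.1) (hmem d hu.2.2.2 hw.2.2.2)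
  refine ⟨{a, d}, insert_subset ha (singleton_subset_iff.mpr hd), ncard_pair h.2.2.1, ?_⟩
  rw [image_pair]
  ext x
  simp only [mem_insert_iff, mem_singleton_iff, mem_union]
  tauto

theorem mem_completionFills (hT : IsThickSpiderTail S K f u w) [Finite α] :
    K.ncard ∈ completionFills IsP4Sparse (thickSpiderTail S K f u w) := by
  have hfu := hT.f_mem hT.u_mem
  refine ⟨addStar _ u (insert (f u) (S \ {u})), le_sup_left, hT.isP4Sparse_addStar, ?_⟩
  rw [fillCount_addStar]
  · exact hT.ncard_insert_f_sdiff
  · rintro (h | ⟨-, h⟩)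
    exacts [hT.notMem_K hT.u_mem (h ▸ hfu), h rfl]
  · rintro v (rfl | ⟨hv, -⟩)
    exacts [hT.not_adj_f hT.u_mem, hT.not_adj_of_mem_S hT.u_mem hv]

end IsThickSpiderTail

/-- `untouchedK` and `untouchedS` split the vertices `v ∈ (S ∪ K) \ {u}` such that no fill edge of
`G` over `H + uw` joins `v` to `u` or `w`; for `c ∈ K \ {f u}`, `uc` is already an edge of
`H + uw`. -/
def untouchedK (G : SimpleGraph α) (K : Set α) (f : α → α) (u w : α) : Set α :=
  {c ∈ K | c ≠ f u ∧ ¬ G.Adj w c}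

def untouchedS (G : SimpleGraph α) (S : Set α) (f : α → α) (u w : α) : Set α :=
  {y ∈ insert (f u) (S \ {u}) | ¬ G.Adj w y ∧ ¬ G.Adj u y}

namespace IsThickSpiderTail

variable {S K : Set α} {f : α → α} {u w c y z : α} {G : SimpleGraph α}

theorem isInducedP4_of_mem_untouched (hT : IsThickSpiderTail S K f u w)
    (hle : thickSpiderTail S K f u w ≤ G) (hc : c ∈ untouchedK G K f u w)
    (hy : y ∈ untouchedS G S f u w) (hcy : G.Adj c y) : IsInducedP4 G w u c y :=
  .of_adj (hle hT.adj_u_w).symm (hle (hT.adj_of_ne_f hT.u_mem hc.1 hc.2.1)) hcy hc.2.2 hy.2.1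
    hy.2.2

theorem mem_and_eq_of_not_adj (hT : IsThickSpiderTail S K f u w)
    (hle : thickSpiderTail S K f u w ≤ G) (hc : c ∈ untouchedK G K f u w)
    (hy : y ∈ untouchedS G S f u w) (hcy : ¬ G.Adj c y) : y ∈ S ∧ c = f y := by
  rcases hy.1 with rfl | ⟨hyS, -⟩
  · exact absurd (hle (thickSpiderTail_adj_of_mem hc.1 (hT.f_mem hT.u_mem) hc.2.1)) hcy
  · exact ⟨hyS, by_contra fun h => hcy (hle (hT.adj_of_ne_f hyS hc.1 h)).symm⟩

theorem ncard_untouchedS_le_two (hT : IsThickSpiderTail S K f u w)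
    (hle : thickSpiderTail S K f u w ≤ G) (hG : IsP4Sparse G)
    (hC : (untouchedK G K f u w).Nonempty) : (untouchedS G S f u w).ncard ≤ 2 := by
  obtain ⟨c, hc⟩ := hC
  refine ncard_le_two_of_subsingleton (G.Adj c) ?_ ?_
  · rintro y₁ ⟨hy₁, h₁⟩ y₂ ⟨hy₂, h₂⟩
    exact hG.eq_of_isInducedP4_last (hT.isInducedP4_of_mem_untouched hle hc hy₁ h₁)
      (hT.isInducedP4_of_mem_untouched hle hc hy₂ h₂)
  · rintro y₁ ⟨hy₁, h₁⟩ y₂ ⟨hy₂, h₂⟩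
    obtain ⟨hS₁, e₁⟩ := hT.mem_and_eq_of_not_adj hle hc hy₁ h₁
    obtain ⟨hS₂, e₂⟩ := hT.mem_and_eq_of_not_adj hle hc hy₂ h₂
    exact hT.bijOn.injOn hS₁ hS₂ (e₁.symm.trans e₂)

theorem ncard_untouchedK_le_two (hT : IsThickSpiderTail S K f u w)
    (hle : thickSpiderTail S K f u w ≤ G) (hG : IsP4Sparse G)
    (hY : (untouchedS G S f u w).Nonempty) : (untouchedK G K f u w).ncard ≤ 2 := by
  obtain ⟨y, hy⟩ := hY
  refine ncard_le_two_of_subsingleton (fun c => G.Adj c y) ?_ ?_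
  · rintro c₁ ⟨hc₁, h₁⟩ c₂ ⟨hc₂, h₂⟩
    exact hG.eq_of_isInducedP4_third (hT.isInducedP4_of_mem_untouched hle hc₁ hy h₁)
      (hT.isInducedP4_of_mem_untouched hle hc₂ hy h₂)
  · rintro c₁ ⟨hc₁, h₁⟩ c₂ ⟨hc₂, h₂⟩
    exact (hT.mem_and_eq_of_not_adj hle hc₁ hy h₁).2.trans
      (hT.mem_and_eq_of_not_adj hle hc₂ hy h₂).2.symm

theorem ncard_untouchedK_lt [Finite α] (hT : IsThickSpiderTail S K f u w) :
    (untouchedK G K f u w).ncard < K.ncard := by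
  have hfu := hT.f_mem hT.u_mem
  refine ncard_lt_ncard ⟨fun c hc => hc.1, fun h => ?_⟩
  exact (h hfu).2.1 rfl

theorem ncard_untouchedS_le [Finite α] (hT : IsThickSpiderTail S K f u w) :
    (untouchedS G S f u w).ncard ≤ K.ncard :=
  hT.ncard_insert_f_sdiff ▸ ncard_le_ncard (sep_subset _ _)

theorem ncard_untouched_le [Finite α] (hT : IsThickSpiderTail S K f u w) (hk : 4 ≤ K.ncard)
    (hle : thickSpiderTail S K f u w ≤ G) (hG : IsP4Sparse G) :
    (untouchedK G K f u w).ncard + (untouchedS G S f u w).ncard ≤ K.ncard := by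
  rcases (untouchedK G K f u w).eq_empty_or_nonempty with hC | hC
  · rw [hC, ncard_empty, zero_add]
    exact hT.ncard_untouchedS_le
  rcases (untouchedS G S f u w).eq_empty_or_nonempty with hY | hY
  · rw [hY, ncard_empty, add_zero]
    exact hT.ncard_untouchedK_lt.le
  have := hT.ncard_untouchedS_le_two hle hG hC
  have := hT.ncard_untouchedK_le_two hle hG hY
  omega

theorem false_of_untouchedK_eq_empty [Finite α] (hT : IsThickSpiderTail S K f u w)
    (hk : 2 ≤ K.ncard) (hle : thickSpiderTail S K f u w ≤ G) (hG : IsP4Sparse G)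
    (hagree : ∀ x ∈ S, ∀ y ∈ S ∪ K, x ≠ u → y ≠ u → G.Adj x y →
      (thickSpiderTail S K f u w).Adj x y)
    (hC : untouchedK G K f u w = ∅) (hY : (untouchedS G S f u w).ncard = K.ncard) : False := by
  have hYall : untouchedS G S f u w = insert (f u) (S \ {u}) :=
    eq_of_subset_of_ncard_le (sep_subset _ _) (by rw [hT.ncard_insert_f_sdiff, hY])
  have hfuK := hT.f_mem hT.u_mem
  obtain ⟨a, haK, hafu⟩ := exists_ne_of_one_lt_ncard (s := K) (by omega) (f u)
  obtain ⟨x, hxS, rfl⟩ := hT.bijOn.surjOn haK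
  have hxu : x ≠ u := by rintro rfl; exact hafu rfl
  have hwa : G.Adj w (f x) := by
    by_contra h
    exact (hC ▸ ⟨haK, hafu, h⟩ : f x ∈ (∅ : Set α))
  have hx : x ∈ untouchedS G S f u w := hYall ▸ mem_insert_of_mem _ ⟨hxS, hxu⟩
  have hfu : f u ∈ untouchedS G S f u w := hYall ▸ mem_insert _ _
  have hxa : ¬ G.Adj x (f x) := fun h =>
    hT.not_adj_f hxS (hagree x hxS _ (Or.inr haK) hxu (fun e => hT.notMem_K hT.u_mem (e ▸ haK)) h)
  have h₁ : G.Adj x (f u) := hle (hT.adj_of_ne_f hxS hfuK hafu.symm)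
  have h₂ : G.Adj (f u) (f x) := hle (thickSpiderTail_adj_of_mem hfuK haK hafu.symm)
  have h₃ : G.Adj (f x) u := hle (hT.adj_of_ne_f hT.u_mem haK hafu).symm
  have := hG.eq_of_isInducedP4_last
    (.of_adj h₁ h₂ h₃ hxa (fun h => hx.2.2 h.symm) (fun h => hfu.2.2 h.symm))
    (.of_adj h₁ h₂ hwa.symm hxa (fun h => hx.2.1 h.symm) (fun h => hfu.2.1 h.symm))
  exact hT.ne_w (Or.inl hT.u_mem) this

theorem f_notMem_untouchedS (hT : IsThickSpiderTail S K f u w)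
    (hle : thickSpiderTail S K f u w ≤ G) (hG : IsP4Sparse G)
    (hC : 1 < (untouchedK G K f u w).ncard) : f u ∉ untouchedS G S f u w := by
  intro hfu
  obtain ⟨c₁, hc₁, c₂, hc₂, hne⟩ := (one_lt_ncard (finite_of_ncard_pos (by omega))).mp hC
  have hfuK := hT.f_mem hT.u_mem
  have hadj : ∀ c ∈ untouchedK G K f u w, G.Adj c (f u) := fun c hc =>
    hle (thickSpiderTail_adj_of_mem hc.1 hfuK hc.2.1)
  exact hne (hG.eq_of_isInducedP4_third
    (hT.isInducedP4_of_mem_untouched hle hc₁ hfu (hadj c₁ hc₁))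
    (hT.isInducedP4_of_mem_untouched hle hc₂ hfu (hadj c₂ hc₂)))

theorem eq_of_adj_w (hT : IsThickSpiderTail S K f u w) (hle : thickSpiderTail S K f u w ≤ G)
    (hG : IsP4Sparse G) (hc : c ∈ untouchedK G K f u w) (hy : y ∈ untouchedS G S f u w)
    (hcy : G.Adj c y) (hz : z ∈ S) (hcz : c ≠ f z) (hwz : G.Adj w z) (hzy : ¬ G.Adj z y) :
    u = z :=
  hG.eq_of_isInducedP4_second (hT.isInducedP4_of_mem_untouched hle hc hy hcy)
    (.of_adj hwz (hle (hT.adj_of_ne_f hz hc.1 hcz)) hcy hc.2.2 hy.2.1 hzy)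

theorem false_of_adj_u (hT : IsThickSpiderTail S K f u w) (hle : thickSpiderTail S K f u w ≤ G)
    (hG : IsP4Sparse G) (hy : y ∈ S) (hz : z ∈ S) (hzy : z ≠ y) (hzu : z ≠ u)
    (huz : G.Adj u z) (huy : ¬ G.Adj u y) (hzy' : ¬ G.Adj z y) (hzfz : ¬ G.Adj z (f z))
    (hyfy : ¬ G.Adj y (f y)) : False := by
  have hfzK := hT.f_mem hz
  have hfyK := hT.f_mem hy
  have hfzy : G.Adj (f z) y := (hle (hT.adj_of_ne_f hy hfzK (hT.f_ne_f hz hy hzy))).symm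
  have := hG.eq_of_isInducedP4_second
    (.of_adj huz.symm (hle (hT.adj_of_ne_f hT.u_mem hfzK (hT.f_ne_f hz hT.u_mem hzu))) hfzy
      hzfz hzy' huy)
    (.of_adj (hle (hT.adj_of_ne_f hz hfyK (hT.f_ne_f hy hz hzy.symm)))
      (hle (thickSpiderTail_adj_of_mem hfyK hfzK (hT.f_ne_f hy hz hzy.symm))) hfzy hzfz hzy'
      fun h => hyfy h.symm)
  exact hT.notMem_K hT.u_mem (this ▸ hfyK)

theorem false_of_ncard_untouched_eq_two [Finite α] (hT : IsThickSpiderTail S K f u w)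
    (hk : 4 ≤ K.ncard) (hle : thickSpiderTail S K f u w ≤ G) (hG : IsP4Sparse G)
    (hagree : ∀ x ∈ S, ∀ y ∈ S ∪ K, x ≠ u → y ≠ u → G.Adj x y →
      (thickSpiderTail S K f u w).Adj x y)
    (hC : (untouchedK G K f u w).ncard = 2) (hY : (untouchedS G S f u w).ncard = 2) : False := by
  have hfuY := hT.f_notMem_untouchedS hle hG (by omega)
  obtain ⟨x, y, hxy, hYxy⟩ := ncard_eq_two.mp hY
  have hx : x ∈ untouchedS G S f u w := hYxy ▸ mem_insert _ _
  have hy : y ∈ untouchedS G S f u w := hYxy ▸ mem_insert_of_mem _ rfl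
  have hxS : x ∈ S \ {u} := hx.1.resolve_left fun h => hfuY (h ▸ hx)
  have hyS : y ∈ S \ {u} := hy.1.resolve_left fun h => hfuY (h ▸ hy)
  obtain ⟨c, hc, hcy⟩ := exists_ne_of_one_lt_ncard (by omega : 1 < (untouchedK G K f u w).ncard)
    (f y)
  have hcy' : G.Adj c y := by_contra fun h => hcy (hT.mem_and_eq_of_not_adj hle hc hy h).2
  obtain rfl : c = f x := by
    by_contra hcx
    have hcx' : G.Adj c x := (hle (hT.adj_of_ne_f hxS.1 hc.1 hcx)).symm
    exact hxy (hG.eq_of_isInducedP4_last (hT.isInducedP4_of_mem_untouched hle hc hx hcx')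
      (hT.isInducedP4_of_mem_untouched hle hc hy hcy'))
  obtain ⟨z, hzS, hzu, hzx, hzy⟩ := exists_mem_ne_ne_ne (hT.ncard_S ▸ hk) u x y
  have hzy' : ¬ G.Adj z y := fun h =>
    hT.not_adj_of_mem_S hzS hyS.1 (hagree z hzS y (Or.inl hyS.1) hzu hyS.2 h)
  have hwz : G.Adj w z ∨ G.Adj u z := by
    by_contra h
    rw [not_or] at h
    have : z ∈ untouchedS G S f u w := ⟨mem_insert_of_mem _ ⟨hzS, hzu⟩, h⟩
    rw [hYxy] at this
    rcases this with rfl | rfl <;> contradiction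
  rcases hwz with hwz | huz
  · exact hzu (hT.eq_of_adj_w hle hG hc hy hcy' hzS (hT.f_ne_f hxS.1 hzS (Ne.symm hzx)) hwz
      hzy').symm
  · have hnK : ∀ {v}, v ∈ K → v ≠ u := fun hv e => hT.notMem_K hT.u_mem (e ▸ hv)
    exact hT.false_of_adj_u hle hG hyS.1 hzS hzy hzu huz hy.2.2 hzy'
      (fun h => hT.not_adj_f hzS (hagree z hzS _ (Or.inr (hT.f_mem hzS)) hzu
        (hnK (hT.f_mem hzS)) h))
      (fun h => hT.not_adj_f hyS.1 (hagree y hyS.1 _ (Or.inr (hT.f_mem hyS.1)) hyS.2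
        (hnK (hT.f_mem hyS.1)) h))

theorem ncard_untouched_lt [Finite α] (hT : IsThickSpiderTail S K f u w) (hk : 4 ≤ K.ncard)
    (hle : thickSpiderTail S K f u w ≤ G) (hG : IsP4Sparse G)
    (hagree : ∀ x ∈ S, ∀ y ∈ S ∪ K, x ≠ u → y ≠ u → G.Adj x y →
      (thickSpiderTail S K f u w).Adj x y) :
    (untouchedK G K f u w).ncard + (untouchedS G S f u w).ncard < K.ncard := by
  rcases (untouchedS G S f u w).eq_empty_or_nonempty with hY | hY
  · rw [hY, ncard_empty, add_zero]
    exact hT.ncard_untouchedK_lt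
  rcases (untouchedK G K f u w).eq_empty_or_nonempty with hC | hC
  · rw [hC, ncard_empty, zero_add]
    exact hT.ncard_untouchedS_le.lt_of_ne
      (hT.false_of_untouchedK_eq_empty (by omega) hle hG hagree hC)
  have := hT.ncard_untouchedS_le_two hle hG hC
  have := hT.ncard_untouchedK_le_two hle hG hY
  by_contra hge
  exact hT.false_of_ncard_untouched_eq_two hk hle hG hagree (by omega) (by omega)

theorem mem_fill_of_notMem_untouched (hT : IsThickSpiderTail S K f u w) {v : α}
    (hv : v ∈ (S ∪ K) \ {u}) (hvU : v ∉ untouchedK G K f u w ∪ untouchedS G S f u w) :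
    s(w, v) ∈ G.edgeSet \ (thickSpiderTail S K f u w).edgeSet ∨
      s(u, v) ∈ G.edgeSet \ (thickSpiderTail S K f u w).edgeSet := by
  obtain ⟨hv, hvu⟩ := hv
  by_cases hwv : G.Adj w v
  · exact Or.inl ⟨hwv, hT.not_adj_w hvu⟩
  have huv : ∀ hv' : v ∈ insert (f u) (S \ {u}), G.Adj u v := fun hv' =>
    by_contra fun h => hvU (Or.inr ⟨hv', hwv, h⟩)
  right
  rcases hv with hvS | hvK
  · exact ⟨huv (mem_insert_of_mem _ ⟨hvS, hvu⟩), hT.not_adj_of_mem_S hT.u_mem hvS⟩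
  · by_cases hvfu : v = f u
    · subst hvfu
      exact ⟨huv (mem_insert _ _), hT.not_adj_f hT.u_mem⟩
    · exact absurd (Or.inl ⟨hvK, hvfu, hwv⟩) hvU

theorem ncard_le_fillCount [Finite α] (hT : IsThickSpiderTail S K f u w) (hk : 4 ≤ K.ncard)
    (hle : thickSpiderTail S K f u w ≤ G) (hG : IsP4Sparse G) :
    K.ncard ≤ fillCount (thickSpiderTail S K f u w) G := by
  rw [fillCount]
  set F := G.edgeSet \ (thickSpiderTail S K f u w).edgeSet
  have hcount := ncard_add_ncard_le_of_forall_mem (F := F)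
    (U := untouchedK G K f u w ∪ untouchedS G S f u w) (V := (S ∪ K) \ {u})
    (fun h => h.2 rfl) (fun h => hT.ne_w h.1 rfl)
    fun v hv => hT.mem_fill_of_notMem_untouched hv.1 hv.2
  have hV : ((S ∪ K) \ {u}).ncard + 1 = 2 * K.ncard := by
    rw [ncard_sdiff_singleton_add_one (mem_union_left K hT.u_mem), ncard_union_eq hT.disjoint,
      hT.ncard_S]
    ring
  have := ncard_union_le (untouchedK G K f u w) (untouchedS G S f u w)
  rcases {e ∈ F | u ∉ e ∧ w ∉ e}.eq_empty_or_nonempty with h₀ | h₀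
  · have := hT.ncard_untouched_lt hk hle hG fun x hx y hy hxu hyu hxy => by
      by_contra h
      have : s(x, y) ∈ {e ∈ F | u ∉ e ∧ w ∉ e} :=
        ⟨⟨hxy, h⟩, by simp [hxu.symm, hyu.symm, (hT.ne_w (Or.inl hx)).symm, (hT.ne_w hy).symm]⟩
      rwa [h₀] at this
    omega
  · have := hT.ncard_untouched_le hk hle hG
    have := h₀.ncard_pos
    omega

end IsThickSpiderTail

/-- tail at `u ∈ S` of a thick spider with `|K| ≥ 4` and `R = ∅`. -/
theorem thickSpider_tail_S_K4_empty_R [Fintype α]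
    (H : SimpleGraph α) (u w : α) (S K R : Set α)
    (hspider : ThickSpider H S K R)
    (hcover : S ∪ K ∪ R = {w}ᶜ)
    (hw : ∀ x, ¬ H.Adj w x)
    (hK4 : 4 ≤ K.ncard) (hR : R = ∅) (hu : u ∈ S) :
    IsLeast (completionFills IsP4Sparse (addTail H u w)) K.ncard := by
  subst hR
  rw [union_empty] at hcover
  obtain ⟨f, hT, hbase⟩ := hspider.exists_addTail_eq_thickSpiderTail hcover hw hu
  rw [hbase]
  exact ⟨hT.mem_completionFills, fun _ ⟨_, hle, hG, hn⟩ => hn ▸ hT.ncard_le_fillCount hK4 hle hG⟩
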